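/- arXiv:2211.16766 — 2 statements merged into one kernel-verified Lean document; each statement's English description precedes it below -/
import Mathlib

section
/- Let n ≥ 2, let a be a non-constant binary sequence of period n, and let a^{(τ)} denote its cyclic shift by τ for 1 ≤ τ ≤ n-1 with a^{(τ)} ≠ a. Then 1 ≤ |σ(a) - σ(a^{(τ)})| ≤ 2^n - 3 and 1 ≤ w₂(|σ(a) - σ(a^{(τ)})|) ≤ n - 1. -/
/-!
Shifting a periodic sequence does not change the set of values it takes on one period, so both
`a` and its shift contain a `0` and a `1`; hence both `σ`-values lie in `[1, 2 ^ n - 2]`, and they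
differ because binary expansions are unique. For the weight: a number with `w` binary ones is at
least `2 ^ w - 1`, so a difference of at most `2 ^ n - 3` has weight below `n`.
-/

def w2 (a : ℕ) : ℕ := (Nat.digits 2 a).sum

def sigma (n : ℕ) (a : ℕ → ℕ) : ℕ := ∑ l ∈ Finset.range n, a l * 2 ^ l

lemma sigma_succ (n : ℕ) (a : ℕ → ℕ) : sigma (n + 1) a = sigma n a + a n * 2 ^ n :=
  Finset.sum_range_succ _ _

lemma sigma_eq_ofDigits (n : ℕ) (a : ℕ → ℕ) :
    sigma n a = Nat.ofDigits 2 ((List.range n).map a) := by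
  induction n with
  | zero => rfl
  | succ n ih =>
    rw [sigma_succ, ih, List.range_succ, List.map_append, Nat.ofDigits_append]
    simp [Nat.ofDigits_singleton, mul_comm]

lemma one_le_sigma {n : ℕ} {a : ℕ → ℕ} {l : ℕ} (hl : l < n) (ha : a l ≠ 0) : 1 ≤ sigma n a :=
  calc 1 ≤ a l * 2 ^ l := Nat.one_le_iff_ne_zero.mpr (mul_ne_zero ha (by positivity))
    _ ≤ sigma n a := Finset.single_le_sum (f := fun l => a l * 2 ^ l)
        (fun _ _ => Nat.zero_le _) (Finset.mem_range.mpr hl)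

lemma sigma_add_sigma_compl {n : ℕ} {a : ℕ → ℕ} (ha : ∀ l < n, a l ≤ 1) :
    sigma n a + sigma n (fun l => 1 - a l) = 2 ^ n - 1 := by
  have hterm : ∀ l ∈ Finset.range n, a l * 2 ^ l + (1 - a l) * 2 ^ l = 2 ^ l := by
    intro l hl
    rw [← add_mul, Nat.add_sub_cancel' (ha l (Finset.mem_range.mp hl)), one_mul]
  rw [sigma, sigma, ← Finset.sum_add_distrib, Finset.sum_congr rfl hterm, Nat.geomSum_eq le_rfl]
  simp

lemma sigma_le_two_pow_sub_two {n : ℕ} {a : ℕ → ℕ} (ha : ∀ l < n, a l ≤ 1) {l : ℕ} (hl : l < n)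
    (hal : a l = 0) : sigma n a ≤ 2 ^ n - 2 := by
  have := one_le_sigma (a := fun l => 1 - a l) hl (by simp [hal])
  have := sigma_add_sigma_compl ha
  omega

lemma eq_of_sigma_eq {n : ℕ} {a b : ℕ → ℕ} (ha : ∀ l < n, a l ≤ 1) (hb : ∀ l < n, b l ≤ 1)
    (h : sigma n a = sigma n b) : ∀ l < n, a l = b l := by
  rw [sigma_eq_ofDigits, sigma_eq_ofDigits] at h
  have := Nat.ofDigits_inj_of_len_eq one_lt_two (by simp)
    (by simpa [Nat.lt_succ_iff] using ha) (by simpa [Nat.lt_succ_iff] using hb) h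
  intro l hl
  simpa [hl] using congrArg (·[l]?) this

lemma Function.Periodic.exists_lt_apply_add_eq {α : Type*} {a : ℕ → α} {n : ℕ} (ha : Function.Periodic a n)
    (hn : 0 < n) (τ l₀ : ℕ) : ∃ l < n, a (l + τ) = a l₀ := by
  refine ⟨(l₀ + n * τ - τ) % n, Nat.mod_lt _ hn, ?_⟩
  have hτ : τ ≤ n * τ := Nat.le_mul_of_pos_left τ hn
  rw [← ha.map_mod_nat, Nat.mod_add_mod, Nat.sub_add_cancel (by omega), Nat.add_mul_mod_self_left,
    ha.map_mod_nat]

lemma one_le_w2 {d : ℕ} (hd : d ≠ 0) : 1 ≤ w2 d :=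
  (Nat.one_le_iff_ne_zero.mpr (Nat.getLast_digit_ne_zero 2 hd)).trans
    (List.le_sum_of_mem (List.getLast_mem _))

lemma two_pow_w2_le (d : ℕ) : 2 ^ w2 d ≤ d + 1 := by
  induction d using Nat.strong_induction_on with
  | _ d ih =>
    rcases Nat.eq_zero_or_pos d with rfl | hd
    · simp [w2]
    have hrec : w2 d = d % 2 + w2 (d / 2) := by
      rw [w2, Nat.digits_def' one_lt_two hd, List.sum_cons, w2]
    have := ih (d / 2) (Nat.div_lt_self hd one_lt_two)
    rw [hrec, pow_add]
    rcases Nat.mod_two_eq_zero_or_one d with h | h <;> rw [h] <;> omega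

theorem sigma_diff_bounds_general (n : ℕ) (a : ℕ → ℕ)
    (hbin : ∀ l, a l ≤ 1) (hper : ∀ l, a (l + n) = a l)
    (hnz : ∃ l < n, a l ≠ 0) (hno : ∃ l < n, a l ≠ 1)
    (τ : ℕ)
    (hne : ∃ l < n, a (l + τ) ≠ a l) :
    (1 ≤ ((sigma n a : ℤ) - sigma n (fun l => a (l + τ))).natAbs ∧
      ((sigma n a : ℤ) - sigma n (fun l => a (l + τ))).natAbs ≤ 2 ^ n - 3) ∧
    1 ≤ w2 ((sigma n a : ℤ) - sigma n (fun l => a (l + τ))).natAbs ∧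
      w2 ((sigma n a : ℤ) - sigma n (fun l => a (l + τ))).natAbs ≤ n - 1 := by
  obtain ⟨l₁, hl₁, ha₁⟩ := hnz
  obtain ⟨l₀, hl₀, ha₀⟩ := hno
  replace ha₀ : a l₀ = 0 := by have := hbin l₀; omega
  have hper : Function.Periodic a n := hper
  obtain ⟨m₁, hm₁, hb₁⟩ := hper.exists_lt_apply_add_eq (by omega) τ l₁
  obtain ⟨m₀, hm₀, hb₀⟩ := hper.exists_lt_apply_add_eq (by omega) τ l₀
  have hσ_pos := one_le_sigma hl₁ ha₁
  have hσ_le := sigma_le_two_pow_sub_two (fun l _ => hbin l) hl₀ ha₀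
  have hσshift_pos := one_le_sigma (a := fun l => a (l + τ)) hm₁ (hb₁ ▸ ha₁)
  have hσshift_le := sigma_le_two_pow_sub_two (a := fun l => a (l + τ)) (fun l _ => hbin _) hm₀
    (hb₀.trans ha₀)
  have hσ_ne : sigma n a ≠ sigma n (fun l => a (l + τ)) := by
    obtain ⟨l, hl, hal⟩ := hne
    exact fun h => hal (eq_of_sigma_eq (fun l _ => hbin l) (fun l _ => hbin _) h l hl).symm
  set d := ((sigma n a : ℤ) - sigma n (fun l => a (l + τ))).natAbs
  have hd₁ : 1 ≤ d := by omega
  have hd₂ : d ≤ 2 ^ n - 3 := by omega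
  have hw : w2 d < n := (Nat.pow_lt_pow_iff_right one_lt_two).mp <|
    (two_pow_w2_le d).trans_lt (by omega)
  exact ⟨⟨hd₁, hd₂⟩, one_le_w2 (by omega), by omega⟩

theorem sigma_diff_bounds (n : ℕ) (hn : 2 ≤ n) (a : ℕ → ℕ)
    (hbin : ∀ l, a l ≤ 1) (hper : ∀ l, a (l + n) = a l)
    (hnz : ∃ l < n, a l ≠ 0) (hno : ∃ l < n, a l ≠ 1)
    (τ : ℕ) (hτ1 : 1 ≤ τ) (hτ2 : τ ≤ n - 1)
    (hne : ∃ l < n, a (l + τ) ≠ a l) :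
    (1 ≤ ((sigma n a : ℤ) - sigma n (fun l => a (l + τ))).natAbs ∧
      ((sigma n a : ℤ) - sigma n (fun l => a (l + τ))).natAbs ≤ 2 ^ n - 3) ∧
    1 ≤ w2 ((sigma n a : ℤ) - sigma n (fun l => a (l + τ))).natAbs ∧
      w2 ((sigma n a : ℤ) - sigma n (fun l => a (l + τ))).natAbs ≤ n - 1 :=
  sigma_diff_bounds_general n a hbin hper hnz hno τ hne
end

section
/- Let a, b be binary sequences of period n with (a_0, b_0) = (1, 0) and suppose Σ_{λ=1}^{n-1}(a_λ - b_λ)2^λ < 0. Then σ(a) - σ(b) < 0 and w₂(|σ(a^{(1)}) - σ(b^{(1)})|) = n - w₂(|σ(a) - σ(b)|), where c^{(1)} denotes cyclic shift by 1. -/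
open Finset

lemma w2_two_mul (m : ℕ) : w2 (2 * m) = w2 m := by
  rcases Nat.eq_zero_or_pos m with rfl | hm
  · rfl
  · rw [w2, Nat.digits_def' one_lt_two (by omega), List.sum_cons, Nat.mul_mod_right,
      Nat.mul_div_cancel_left m two_pos, zero_add, w2]

lemma w2_two_mul_add_one (m : ℕ) : w2 (2 * m + 1) = w2 m + 1 := by
  rw [w2, Nat.digits_def' one_lt_two (by omega), List.sum_cons, show (2 * m + 1) % 2 = 1 by omega,
    show (2 * m + 1) / 2 = m by omega, add_comm, w2]

lemma w2_two_pow_sub_one_sub_add_w2 (n x : ℕ) (hx : x < 2 ^ n) :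
    w2 (2 ^ n - 1 - x) + w2 x = n := by
  induction n generalizing x with
  | zero =>
    obtain rfl : x = 0 := by simpa using hx
    rfl
  | succ n ih =>
    have hpow : 2 ^ (n + 1) = 2 * 2 ^ n := by ring
    have h1 : 1 ≤ 2 ^ n := Nat.one_le_two_pow
    rcases Nat.even_or_odd' x with ⟨q, rfl | rfl⟩
    · have hc : 2 ^ (n + 1) - 1 - 2 * q = 2 * (2 ^ n - 1 - q) + 1 := by omega
      have := ih q (by omega)
      rw [hc, w2_two_mul_add_one, w2_two_mul]
      omega
    · have hc : 2 ^ (n + 1) - 1 - (2 * q + 1) = 2 * (2 ^ n - 1 - q) := by omega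
      have := ih q (by omega)
      rw [hc, w2_two_mul_add_one, w2_two_mul]
      omega

lemma w2_natAbs_eq_sub_of_two_mul_eq {n : ℕ} {x y : ℤ} (hx : x ≤ 0) (hlt : -2 ^ n < x)
    (h : 2 * y = x + 2 ^ n - 1) : w2 y.natAbs = n - w2 x.natAbs := by
  obtain ⟨k, rfl⟩ : ∃ k : ℕ, x = -k := ⟨x.natAbs, by omega⟩
  have hcast : ((2 ^ n : ℕ) : ℤ) = 2 ^ n := by push_cast; rfl
  have hk : k < 2 ^ n := by omega
  lift y to ℕ using (by omega)
  have h2 : 2 * y = 2 ^ n - 1 - k := by omega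
  rw [Int.natAbs_neg, Int.natAbs_natCast, Int.natAbs_natCast, ← w2_two_mul, h2]
  have := w2_two_pow_sub_one_sub_add_w2 n k hk
  omega

lemma sigma_lt_two_pow (n : ℕ) {a : ℕ → ℕ} (ha : ∀ l, a l ≤ 1) : sigma n a < 2 ^ n := by
  induction n with
  | zero => simp [sigma]
  | succ n ih =>
    rw [sigma, sum_range_succ, ← sigma, pow_succ]
    nlinarith [ha n]

lemma apply_zero_le_sigma {n : ℕ} (hn : 0 < n) (a : ℕ → ℕ) : a 0 ≤ sigma n a := by
  unfold sigma
  simpa using single_le_sum (f := fun l => a l * 2 ^ l) (fun l _ => Nat.zero_le _) (mem_range.2 hn)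

lemma two_mul_sigma_shift_add (n : ℕ) (a : ℕ → ℕ) :
    2 * sigma n (fun l => a (l + 1)) + a 0 = sigma n a + a n * 2 ^ n := by
  induction n with
  | zero => simp [sigma]
  | succ n ih =>
    simp only [sigma, sum_range_succ] at ih ⊢
    rw [pow_succ]
    linarith

lemma sigma_sub_sigma {n : ℕ} (hn : 0 < n) (a b : ℕ → ℕ) :
    (sigma n a : ℤ) - sigma n b
      = (a 0 - b 0) + ∑ l ∈ Ico 1 n, ((a l : ℤ) - b l) * 2 ^ l := by
  simp only [sigma, Nat.cast_sum, Nat.cast_mul, Nat.cast_pow, Nat.cast_ofNat, ← sum_sub_distrib,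
    ← sub_mul]
  rw [range_eq_Ico, sum_eq_sum_Ico_succ_bot hn]
  simp

theorem sigma_diff_shift_one_neg_general (n : ℕ) (a b : ℕ → ℕ)
    (hbinb : ∀ l, b l ≤ 1)
    (hpera : ∀ l, a (l + n) = a l) (hperb : ∀ l, b (l + n) = b l)
    (ha0 : a 0 = 1) (hb0 : b 0 = 0)
    (hneg : ∑ l ∈ Finset.Ico 1 n, ((a l : ℤ) - b l) * 2 ^ l < 0) :
    (sigma n a : ℤ) - sigma n b < 0 ∧
    w2 ((sigma n (fun l => a (l + 1)) : ℤ) - sigma n (fun l => b (l + 1))).natAbs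
      = n - w2 ((sigma n a : ℤ) - sigma n b).natAbs := by
  have hn : 0 < n := Nat.pos_of_ne_zero (by rintro rfl; simp at hneg)
  have heven : (2 : ℤ) ∣ ∑ l ∈ Ico 1 n, ((a l : ℤ) - b l) * 2 ^ l :=
    dvd_sum fun l hl => (dvd_pow_self 2 (by simp at hl; omega)).mul_left _
  have hD : (sigma n a : ℤ) - sigma n b < 0 := by
    rw [sigma_sub_sigma hn, ha0, hb0]
    omega
  refine ⟨hD, w2_natAbs_eq_sub_of_two_mul_eq hD.le ?_ ?_⟩
  · have ha := apply_zero_le_sigma hn a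
    have hb := sigma_lt_two_pow n hbinb
    rw [ha0] at ha
    zify at ha hb
    linarith
  · have hsa := two_mul_sigma_shift_add n a
    have hsb := two_mul_sigma_shift_add n b
    rw [show a n = 1 by simpa [ha0] using hpera 0, ha0] at hsa
    rw [show b n = 0 by simpa [hb0] using hperb 0, hb0] at hsb
    zify at hsa hsb
    linarith

theorem sigma_diff_shift_one_neg (n : ℕ) (hn : 2 ≤ n) (a b : ℕ → ℕ)
    (hbina : ∀ l, a l ≤ 1) (hbinb : ∀ l, b l ≤ 1)
    (hpera : ∀ l, a (l + n) = a l) (hperb : ∀ l, b (l + n) = b l)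
    (ha0 : a 0 = 1) (hb0 : b 0 = 0)
    (hneg : ∑ l ∈ Finset.Ico 1 n, ((a l : ℤ) - b l) * 2 ^ l < 0) :
    (sigma n a : ℤ) - sigma n b < 0 ∧
    w2 ((sigma n (fun l => a (l + 1)) : ℤ) - sigma n (fun l => b (l + 1))).natAbs
      = n - w2 ((sigma n a : ℤ) - sigma n b).natAbs :=
  sigma_diff_shift_one_neg_general n a b hbinb hpera hperb ha0 hb0 hneg
end
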